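/- Let G be a graph of maximum degree r ≥ 3 whose edges carry i.i.d. weights from a continuous distribution. Then for any edge e and any d ≥ 0, the probability that IB(N(e)) ⊆ N_d(e) is at least 1 − 2(r−1)^{d+1}/(d+1)!. -/

import Mathlib

open MeasureTheory
open scoped ENNReal

variable {V : Type*}

/-- The line graph of `G`: vertices are edges of `G`, two distinct edges being adjacent when
they share an endpoint.  Graph distance in `lineG G` is the paper's edge distance. -/
def lineG (G : SimpleGraph V) : SimpleGraph G.edgeSet where
  Adj e f := e ≠ f ∧ ∃ v : V, v ∈ (e : Sym2 V) ∧ v ∈ (f : Sym2 V)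
  symm := ⟨by
    rintro e f ⟨hne, v, hv1, hv2⟩
    exact ⟨hne.symm, v, hv2, hv1⟩⟩
  loopless := ⟨by rintro e ⟨hne, -⟩; exact hne rfl⟩

/-- The ball `N_d(z)` : vertices at graph distance at most `d` from `z`. -/
def gball {α : Type*} (G : SimpleGraph α) (z : α) (d : ℕ) : Set α :=
  {v | ∃ p : G.Walk z v, p.length ≤ d}

/-- There is a weight-increasing path in `G` from (some vertex of) `Z` to `v`. -/
def IsIncPathFrom {α : Type*} (G : SimpleGraph α) (w : α → ℝ) (Z : Set α) (v : α) : Prop :=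
  ∃ n : ℕ, ∃ p : Fin (n + 1) → α,
    p 0 ∈ Z ∧ p (Fin.last n) = v ∧
    (∀ i : Fin n, G.Adj (p i.castSucc) (p i.succ)) ∧ StrictMono (w ∘ p)

/-- The minimal influence blocking subgraph `IB(Z)`. -/
def IB {α : Type*} (G : SimpleGraph α) (w : α → ℝ) (Z : Set α) : Set α :=
  {v | IsIncPathFrom G w Z v}

/-!
If `IB(N(e))` is not inside `N_d(e)`, a weight-increasing path of the line graph runs from an
edge meeting `e` to an edge at distance more than `d` from `e`. It is traced by a walk of `G`
with increasing edge weights, and strict increase forbids stepping straight back. Started at a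
vertex of `e` where it leaves `e`, this walk needs more than `d` further edges to get that far,
so `e` followed by its next `d + 1` edges is a non-backtracking walk along which the last `d + 1`
weights increase. There are at most `2 (r - 1) ^ (d + 1)` such walks: two directions for `e`,
then at most `r - 1` choices per step. For each of them the `(d + 1)!` orderings of its `d + 1`
distinct, i.i.d. edge weights are disjoint and equally likely events, so the increasing one has
probability at most `1 / (d + 1)!`; a union bound concludes.
-/

open Finset Function MeasureTheory
open scoped Nat

section gball

variable {α : Type*} {H : SimpleGraph α} {z : α}

lemma self_mem_gball (k : ℕ) : z ∈ gball H z k := ⟨.nil, Nat.zero_le k⟩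

lemma gball_mono {k l : ℕ} (h : k ≤ l) : gball H z k ⊆ gball H z l :=
  fun _ ⟨p, hp⟩ => ⟨p, hp.trans h⟩

lemma mem_gball_succ_of_adj {k : ℕ} {x y : α} (hx : x ∈ gball H z k) (hxy : H.Adj x y) :
    y ∈ gball H z (k + 1) := by
  obtain ⟨p, hp⟩ := hx
  exact ⟨p.concat hxy, by simpa using hp⟩

lemma eq_or_adj_of_mem_gball_one {x : α} (hx : x ∈ gball H z 1) : x = z ∨ H.Adj z x := by
  obtain ⟨p, hp⟩ := hx
  cases p with
  | nil => exact .inl rfl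
  | cons h q =>
    obtain rfl := q.eq_of_length_eq_zero (by simp only [SimpleGraph.Walk.length_cons] at hp; omega)
    exact .inr h

end gball

section Walks

variable {G : SimpleGraph V} {W : Sym2 V → ℝ}

lemma exists_mem_mem_of_mem_gball_lineG_one {e a : G.edgeSet}
    (ha : a ∈ gball (lineG G) e 1) : ∃ x, x ∈ (e : Sym2 V) ∧ x ∈ (a : Sym2 V) := by
  rcases eq_or_adj_of_mem_gball_one ha with rfl | ⟨-, x, hxe, hxa⟩
  · exact ⟨_, Sym2.out_fst_mem _, Sym2.out_fst_mem _⟩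
  · exact ⟨x, hxe, hxa⟩

def IsNonbacktrackingWalk (G : SimpleGraph V) {n : ℕ} (t : Fin (n + 2) → V) : Prop :=
  (∀ i : Fin (n + 1), G.Adj (t i.castSucc) (t i.succ)) ∧
    ∀ i : Fin n, t i.succ.succ ≠ t i.castSucc.castSucc

namespace IsNonbacktrackingWalk

variable {n : ℕ}

lemma init {t : Fin (n + 3) → V} (ht : IsNonbacktrackingWalk G t) :
    IsNonbacktrackingWalk G (Fin.init t) :=
  ⟨fun i => by simpa [Fin.init, ← Fin.succ_castSucc] using ht.1 i.castSucc,
    fun i => by simpa [Fin.init, ← Fin.succ_castSucc] using ht.2 i.castSucc⟩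

lemma tail {t : Fin (n + 3) → V} (ht : IsNonbacktrackingWalk G t) :
    IsNonbacktrackingWalk G (Fin.tail t) :=
  ⟨fun i => by simpa only [Fin.tail, Fin.succ_castSucc] using ht.1 i.succ,
    fun i => by simpa only [Fin.tail, Fin.succ_castSucc] using ht.2 i.succ⟩

lemma cons {t : Fin (n + 2) → V} (ht : IsNonbacktrackingWalk G t) {b : V}
    (hb : G.Adj b (t 0)) (hb1 : t 1 ≠ b) :
    IsNonbacktrackingWalk G (Fin.cons b t : Fin (n + 3) → V) := by
  refine ⟨fun i => ?_, fun i => ?_⟩ <;> cases i using Fin.cases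
  · simpa using hb
  · simpa [← Fin.succ_castSucc] using ht.1 _
  · simp only [Fin.cons_succ, Fin.castSucc_zero, Fin.cons_zero]
    exact hb1
  · simpa [← Fin.succ_castSucc] using ht.2 _

end IsNonbacktrackingWalk

open Classical in
noncomputable def nonbacktrackingWalks (G : SimpleGraph V) [Fintype V] (e : Sym2 V) (n : ℕ) :
    Finset (Fin (n + 2) → V) :=
  {t | s(t 0, t 1) = e ∧ IsNonbacktrackingWalk G t}

section Counting

variable [Fintype V]

lemma mem_nonbacktrackingWalks {e : Sym2 V} {n : ℕ} {t : Fin (n + 2) → V} :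
    t ∈ nonbacktrackingWalks G e n ↔ s(t 0, t 1) = e ∧ IsNonbacktrackingWalk G t := by
  classical
  simp [nonbacktrackingWalks]

lemma card_nonbacktrackingWalks_zero_le (e : Sym2 V) : #(nonbacktrackingWalks G e 0) ≤ 2 := by
  classical
  induction e using Sym2.ind with
  | _ a b =>
    refine (card_le_card fun t ht => ?_).trans (card_le_two (a := ![a, b]) (b := ![b, a]))
    obtain ⟨h, -⟩ := mem_nonbacktrackingWalks.1 ht
    have ht' : t = ![t 0, t 1] := by ext i; fin_cases i <;> rfl
    rcases Sym2.eq_iff.1 h with ⟨h0, h1⟩ | ⟨h0, h1⟩ <;> rw [ht', h0, h1] <;> simp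

lemma card_filter_init_eq_le [DecidableEq V] [DecidableRel G.Adj] {r : ℕ}
    (hdeg : ∀ v, G.degree v ≤ r) {n : ℕ} (s : Finset (Fin (n + 3) → V))
    (hs : ∀ t ∈ s, IsNonbacktrackingWalk G t) {b : Fin (n + 2) → V}
    (hb : IsNonbacktrackingWalk G b) : #{t ∈ s | Fin.init t = b} ≤ r - 1 := by
  set u := b (Fin.last (n + 1))
  have hmem : b (Fin.last n).castSucc ∈ G.neighborFinset u := by
    simpa [u] using (hb.1 (Fin.last n)).symm
  calc #{t ∈ s | Fin.init t = b}
      ≤ #((G.neighborFinset u).erase (b (Fin.last n).castSucc)) := by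
        refine card_le_card_of_injOn (fun t => t (Fin.last (n + 2))) (fun t ht => ?_) ?_
        · obtain ⟨hts, rfl⟩ := mem_filter.1 (mem_coe.1 ht)
          have hnb := hs t hts
          exact mem_erase.2
            ⟨hnb.2 (Fin.last n), (G.mem_neighborFinset _ _).2 (hnb.1 (Fin.last (n + 1)))⟩
        · intro t ht t' ht' hlast
          rw [← Fin.snoc_init_self t, ← Fin.snoc_init_self t', (mem_filter.1 ht).2,
            (mem_filter.1 ht').2]
          exact congrArg _ hlast
    _ = G.degree u - 1 := by rw [card_erase_of_mem hmem, G.card_neighborFinset_eq_degree]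
    _ ≤ r - 1 := Nat.sub_le_sub_right (hdeg u) 1

theorem card_nonbacktrackingWalks_le [DecidableRel G.Adj] {r : ℕ} (hdeg : ∀ v, G.degree v ≤ r)
    (e : Sym2 V) : ∀ n, #(nonbacktrackingWalks G e n) ≤ 2 * (r - 1) ^ n
  | 0 => by simpa using card_nonbacktrackingWalks_zero_le e
  | n + 1 => by
    classical
    have hinit (t) (ht : t ∈ nonbacktrackingWalks G e (n + 1)) :
        Fin.init t ∈ nonbacktrackingWalks G e n := by
      obtain ⟨he, hnb⟩ := mem_nonbacktrackingWalks.1 ht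
      exact mem_nonbacktrackingWalks.2 ⟨he, hnb.init⟩
    calc #(nonbacktrackingWalks G e (n + 1))
        ≤ (r - 1) * #(nonbacktrackingWalks G e n) :=
          card_le_mul_card_image_of_maps_to hinit _ fun b hb =>
            card_filter_init_eq_le hdeg _ (fun t ht => (mem_nonbacktrackingWalks.1 ht).2)
              (mem_nonbacktrackingWalks.1 hb).2
      _ ≤ (r - 1) * (2 * (r - 1) ^ n) :=
          Nat.mul_le_mul_left _ (card_nonbacktrackingWalks_le hdeg e n)
      _ = 2 * (r - 1) ^ (n + 1) := by ring

end Counting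

def WeightsIncreaseAlong (W : Sym2 V → ℝ) {n : ℕ} (t : Fin (n + 2) → V) : Prop :=
  StrictMono fun i : Fin (n + 1) => W s(t i.castSucc, t i.succ)

/-- `v 0 ~ v 1 ~ ⋯ ~ v (m + 1)` is a walk of `m + 1` edges in `G` whose weights strictly
increase; the values of `v` beyond `m + 1` play no role. -/
def IsIncreasingWalk (G : SimpleGraph V) (W : Sym2 V → ℝ) (m : ℕ) (v : ℕ → V) : Prop :=
  (∀ i ≤ m, G.Adj (v i) (v (i + 1))) ∧
    ∀ i < m, W s(v i, v (i + 1)) < W s(v (i + 1), v (i + 2))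

lemma isIncreasingWalk_zero {x y : V} (h : G.Adj x y) :
    IsIncreasingWalk G W 0 fun i => if i ≤ 0 then x else y :=
  ⟨fun i hi => by obtain rfl := Nat.le_zero.1 hi; simpa using h,
    fun _ hi => absurd hi (Nat.not_lt_zero _)⟩

namespace IsIncreasingWalk

variable {m : ℕ} {v : ℕ → V}

lemma snoc (hv : IsIncreasingWalk G W m v) {k : ℕ} (hk : k ≤ m) {y : V}
    (hadj : G.Adj (v (k + 1)) y) (hW : W s(v k, v (k + 1)) < W s(v (k + 1), y)) :
    IsIncreasingWalk G W (k + 1) fun i => if i ≤ k + 1 then v i else y := by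
  refine ⟨fun i hi => ?_, fun i hi => ?_⟩
  · rcases hi.lt_or_eq with hi | rfl
    · simpa [hi.le, Nat.succ_le_of_lt hi] using hv.1 i (by omega)
    · simpa using hadj
  · rcases Nat.lt_succ_iff_lt_or_eq.1 hi with hi | rfl
    · simpa [show i ≤ k + 1 by omega, hi.le, show i + 2 ≤ k + 1 by omega]
        using hv.2 i (by omega)
    · simpa using hW

lemma drop (hv : IsIncreasingWalk G W m v) {k : ℕ} (hk : k ≤ m) :
    IsIncreasingWalk G W (m - k) fun i => v (k + i) :=
  ⟨fun i hi => hv.1 (k + i) (by omega), fun i hi => hv.2 (k + i) (by omega)⟩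

lemma ne_of_lt (hv : IsIncreasingWalk G W m v) {i : ℕ} (hi : i < m) : v (i + 2) ≠ v i := by
  intro h
  apply (hv.2 i hi).ne
  rw [h, Sym2.eq_swap]

lemma lineG_adj (hv : IsIncreasingWalk G W m v) {i : ℕ} (hi : i < m) {a b : G.edgeSet}
    (ha : (a : Sym2 V) = s(v i, v (i + 1))) (hb : (b : Sym2 V) = s(v (i + 1), v (i + 2))) :
    (lineG G).Adj a b := by
  refine ⟨fun hab => (hv.2 i hi).ne ?_, v (i + 1), by simp [ha], by simp [hb]⟩
  rw [← ha, ← hb, hab]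

lemma mem_gball (hv : IsIncreasingWalk G W m v) {z a b : G.edgeSet} {k : ℕ}
    (ha : (a : Sym2 V) = s(v 0, v 1)) (haz : a ∈ gball (lineG G) z k)
    (hb : (b : Sym2 V) = s(v m, v (m + 1))) : b ∈ gball (lineG G) z (k + m) := by
  suffices ∀ j ≤ m, ∀ b : G.edgeSet, (b : Sym2 V) = s(v j, v (j + 1)) →
      b ∈ gball (lineG G) z (k + j) from this m le_rfl b hb
  intro j
  induction j with
  | zero => exact fun _ b hb => by rwa [Subtype.ext (hb.trans ha.symm)]
  | succ j ih =>
    intro hj b hb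
    exact mem_gball_succ_of_adj (ih (by omega) ⟨_, G.mem_edgeSet.2 (hv.1 j (by omega))⟩ rfl)
      (hv.lineG_adj (by omega) rfl hb)

lemma isNonbacktrackingWalk (hv : IsIncreasingWalk G W m v) {n : ℕ} (hn : n ≤ m) :
    IsNonbacktrackingWalk G fun i : Fin (n + 2) => v i :=
  ⟨fun i => by simpa using hv.1 i (by omega),
    fun i => by simpa using hv.ne_of_lt (i := i) (by omega)⟩

lemma weightsIncreaseAlong (hv : IsIncreasingWalk G W m v) {n : ℕ} (hn : n ≤ m) :
    WeightsIncreaseAlong W fun i : Fin (n + 2) => v i :=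
  Fin.strictMono_iff_lt_succ.2 fun i => by simpa using hv.2 i (by omega)

end IsIncreasingWalk

/-- The walk is built edge by edge: the next edge of the path replaces the last edge of the
walk if it shares its near endpoint, and extends the walk if it shares its far endpoint. -/
theorem exists_isIncreasingWalk_of_lineG : ∀ {n : ℕ} (p : Fin (n + 1) → G.edgeSet),
    (∀ i : Fin n, (lineG G).Adj (p i.castSucc) (p i.succ)) → StrictMono (fun i => W (p i)) →
    ∀ x ∈ (p 0 : Sym2 V), ∃ m v, v 0 = x ∧ IsIncreasingWalk G W m v ∧
      (p (Fin.last n) : Sym2 V) = s(v m, v (m + 1))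
  | 0, p, _, _, x, hx => by
    obtain ⟨y, hy⟩ := Sym2.mem_iff_exists.1 hx
    exact ⟨0, fun i => if i ≤ 0 then x else y, rfl,
      isIncreasingWalk_zero (G.mem_edgeSet.1 (hy ▸ (p 0).2)), by simpa using hy⟩
  | n + 1, p, hadj, hmono, x, hx => by
    obtain ⟨m, v, hv0, hv, hlast⟩ := exists_isIncreasingWalk_of_lineG (Fin.init p)
      (fun i => by simpa [Fin.init, ← Fin.succ_castSucc] using hadj i.castSucc)
      (hmono.comp Fin.strictMono_castSucc) x hx
    simp only [Fin.init] at hlast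
    have hW : W s(v m, v (m + 1)) < W (p (Fin.last (n + 1))) :=
      hlast ▸ hmono (Fin.castSucc_lt_last _)
    obtain ⟨-, z, hz, hzf⟩ := hadj (Fin.last n)
    obtain ⟨y, hy⟩ := Sym2.mem_iff_exists.1 hzf
    rw [Fin.succ_last] at hy
    have hzy : G.Adj z y := G.mem_edgeSet.1 (hy ▸ (p _).2)
    rw [hlast] at hz
    rcases Sym2.mem_iff.1 hz with rfl | rfl
    · cases m with
      | zero => exact ⟨0, fun i => if i ≤ 0 then v 0 else y, by simpa using hv0,
          isIncreasingWalk_zero hzy, by simp [hy]⟩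
      | succ k =>
        exact ⟨k + 1, _, by simp [hv0], hv.snoc (by omega) hzy ((hv.2 k (by omega)).trans
          (by rwa [← hy])), by simp [hy]⟩
    · exact ⟨m + 1, _, by simp [hv0], hv.snoc le_rfl hzy (by rwa [← hy]), by simp [hy]⟩

lemma exists_mem_and_ne_of_mem_of_ne {e : Sym2 V} {v : ℕ → V} {m : ℕ} (h0 : v 0 ∈ e)
    (hm : s(v m, v (m + 1)) ≠ e) : ∃ k ≤ m, v k ∈ e ∧ s(v k, v (k + 1)) ≠ e := by
  by_contra! h
  have hmem : ∀ k ≤ m, v k ∈ e := by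
    intro k
    induction k with
    | zero => exact fun _ => h0
    | succ k ih => exact fun hk => h k (by omega) (ih (by omega)) ▸ Sym2.mem_mk_right _ _
  exact hm (h m le_rfl (hmem m le_rfl))

/-- `extend Subtype.val w 0` reads the weight `w` on edges of `G`; walks of `G` never see the
junk value `0` it takes elsewhere. -/
theorem exists_nonbacktrackingWalk_of_not_IB_subset [Fintype V] {w : G.edgeSet → ℝ}
    {e : G.edgeSet} {d : ℕ}
    (h : ¬ IB (lineG G) w (gball (lineG G) e 1) ⊆ gball (lineG G) e d) :
    ∃ t ∈ nonbacktrackingWalks G e (d + 1),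
      WeightsIncreaseAlong (extend Subtype.val w 0) (Fin.tail t) := by
  obtain ⟨a, ⟨n, p, hp0, rfl, hadj, hmono⟩, ha⟩ := Set.not_subset.1 h
  obtain ⟨x, hxe, hxp⟩ := exists_mem_mem_of_mem_gball_lineG_one hp0
  obtain ⟨m, v, rfl, hv, hlast⟩ :=
    exists_isIncreasingWalk_of_lineG (W := extend Subtype.val w 0) p hadj
      (by simp only [Subtype.val_injective.extend_apply]; exact hmono) _ hxp
  have hne : s(v m, v (m + 1)) ≠ e := fun he =>
    ha (Subtype.ext (hlast.trans he) ▸ self_mem_gball d)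
  obtain ⟨k, hkm, hke, hkne⟩ := exists_mem_and_ne_of_mem_of_ne hxe hne
  have hv' := hv.drop hkm
  have hfar : p (Fin.last n) ∈ gball (lineG G) e (1 + (m - k)) := by
    refine hv'.mem_gball (a := ⟨_, G.mem_edgeSet.2 (hv.1 k hkm)⟩) rfl
      (mem_gball_succ_of_adj (self_mem_gball 0)
        ⟨fun h => hkne (congrArg Subtype.val h).symm, _, hke, Sym2.mem_mk_left _ _⟩) ?_
    simpa [show k + (m - k) = m by omega, show k + (m - k + 1) = m + 1 by omega] using hlast
  have hd : d ≤ m - k := by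
    by_contra! hd
    exact ha (gball_mono (by omega) hfar)
  -- prepending the other endpoint `b` of `e` makes `e` the first edge of the walk
  obtain ⟨b, hb⟩ := Sym2.mem_iff_exists.1 hke
  refine ⟨Fin.cons b fun i : Fin (d + 2) => v (k + i),
    mem_nonbacktrackingWalks.2 ⟨?_, (hv'.isNonbacktrackingWalk hd).cons ?_ ?_⟩,
    by simpa using hv'.weightsIncreaseAlong hd⟩
  · simpa [Sym2.eq_swap] using hb.symm
  · simpa using (G.mem_edgeSet.1 (hb ▸ e.2)).symm
  · intro h1
    simp only [Fin.val_one] at h1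
    exact hkne (by rw [hb, h1])

end Walks

section Ordering

variable {ι : Type*} {m : ℕ} (f : Fin m → ι)

lemma measurableSet_setOf_strictMono_comp :
    MeasurableSet {w : ι → ℝ | StrictMono (w ∘ f)} := by
  simp only [StrictMono, Set.ofPred_forall]
  exact .iInter fun i => .iInter fun j => .iInter fun _ =>
    measurableSet_lt (measurable_pi_apply _) (measurable_pi_apply _)

/-- Relabelling the coordinates in the range of `f` along `σ` is measure preserving. -/
lemma measure_pi_setOf_strictMono_comp_perm [Fintype ι] (ν : Measure ℝ) [SigmaFinite ν]
    (hf : Injective f) (σ : Equiv.Perm (Fin m)) :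
    Measure.pi (fun _ : ι => ν) {w | StrictMono (w ∘ f ∘ σ)} =
      Measure.pi (fun _ : ι => ν) {w | StrictMono (w ∘ f)} := by
  classical
  set π := σ.viaFintypeEmbedding ⟨f, hf⟩
  have happ (w : ι → ℝ) (i) :
      MeasurableEquiv.piCongrLeft (fun _ => ℝ) π w (f (σ i)) = w (f i) := by
    have hπ : π (f i) = f (σ i) := σ.viaFintypeEmbedding_apply_image ⟨f, hf⟩ i
    rw [← hπ]
    exact MeasurableEquiv.piCongrLeft_apply_apply (β := fun _ => ℝ) π w (f i)
  have hpre : MeasurableEquiv.piCongrLeft (fun _ => ℝ) π ⁻¹'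
      {w | StrictMono (w ∘ f ∘ σ)} = {w | StrictMono (w ∘ f)} := by
    ext w
    simp only [Set.mem_preimage, Set.mem_ofPred_eq, comp_def, happ]
  rw [← hpre, (measurePreserving_piCongrLeft (fun _ => ν) π).measure_preimage
    (measurableSet_setOf_strictMono_comp (f ∘ σ)).nullMeasurableSet]

theorem measure_pi_setOf_strictMono_comp_le [Fintype ι] (ν : Measure ℝ)
    [IsProbabilityMeasure ν] :
    Measure.pi (fun _ : ι => ν) {w | StrictMono (w ∘ f)} ≤ (m ! : ℝ≥0∞)⁻¹ := by
  by_cases hf : Injective f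
  swap
  · have hempty : {w : ι → ℝ | StrictMono (w ∘ f)} = ∅ :=
      Set.eq_empty_of_forall_notMem fun w (hw : StrictMono (w ∘ f)) => hf hw.injective.of_comp
    simp [hempty]
  set E : Equiv.Perm (Fin m) → Set (ι → ℝ) := fun σ => {w | StrictMono (w ∘ f ∘ σ)}
  have hdisj : Pairwise (onFun Disjoint E) := fun σ τ hστ =>
    Set.disjoint_left.2 fun w (hσ : StrictMono (w ∘ f ∘ σ))
      (hτ : StrictMono (w ∘ f ∘ τ)) =>
    have hinj : Injective (w ∘ f) := .of_comp_right (g := σ) hσ.injective σ.surjective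
    hστ <| Equiv.ext fun i =>
      hinj (congrFun (Tuple.unique_monotone (f := w ∘ f) hσ.monotone hτ.monotone) i)
  refine ENNReal.le_inv_iff_mul_le.2 ?_
  calc Measure.pi (fun _ : ι => ν) {w | StrictMono (w ∘ f)} * m !
      = ∑ σ, Measure.pi (fun _ : ι => ν) (E σ) := by
        simp [E, measure_pi_setOf_strictMono_comp_perm f ν hf, Fintype.card_perm, mul_comm]
    _ = Measure.pi (fun _ : ι => ν) (⋃ σ, E σ) := ((measure_iUnion hdisj fun σ =>
        measurableSet_setOf_strictMono_comp (f ∘ σ)).trans (tsum_fintype _)).symm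
    _ ≤ 1 := prob_le_one

end Ordering

lemma measure_weightsIncreaseAlong_le {G : SimpleGraph V} [Fintype G.edgeSet] (ν : Measure ℝ)
    [IsProbabilityMeasure ν] {n : ℕ} {t : Fin (n + 2) → V}
    (ht : ∀ i : Fin (n + 1), G.Adj (t i.castSucc) (t i.succ)) :
    Measure.pi (fun _ : G.edgeSet => ν) {w | WeightsIncreaseAlong (extend Subtype.val w 0) t} ≤
      ((n + 1)! : ℝ≥0∞)⁻¹ := by
  convert measure_pi_setOf_strictMono_comp_le
    (fun i => (⟨_, G.mem_edgeSet.2 (ht i)⟩ : G.edgeSet)) ν using 3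
  ext w
  simp only [WeightsIncreaseAlong, comp_def, ← Subtype.val_injective.extend_apply w 0]

theorem IB_ball_probability_edges_general [Fintype V] (G : SimpleGraph V)
    [DecidableRel G.Adj] (r : ℕ) (hdeg : ∀ v, G.degree v ≤ r)
    (e : G.edgeSet) (d : ℕ) (ν : Measure ℝ) [IsProbabilityMeasure ν] :
    1 - ((2 * (r - 1) ^ (d + 1) : ℕ) : ℝ≥0∞) / ((Nat.factorial (d + 1) : ℕ) : ℝ≥0∞) ≤
      (Measure.pi fun _ : G.edgeSet => ν)
        {w : G.edgeSet → ℝ | IB (lineG G) w (gball (lineG G) e 1) ⊆ gball (lineG G) e d} := by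
  set μ := Measure.pi fun _ : G.edgeSet => ν
  set S := {w : G.edgeSet → ℝ | IB (lineG G) w (gball (lineG G) e 1) ⊆ gball (lineG G) e d}
  have hcover : Sᶜ ⊆ ⋃ t ∈ nonbacktrackingWalks G e (d + 1),
      {w | WeightsIncreaseAlong (extend Subtype.val w 0) (Fin.tail t)} := fun w hw => by
    simpa using exists_nonbacktrackingWalk_of_not_IB_subset hw
  have hbad : μ Sᶜ ≤ ((2 * (r - 1) ^ (d + 1) : ℕ) : ℝ≥0∞) / ((d + 1)! : ℕ) :=
    calc μ Sᶜ
        ≤ ∑ t ∈ nonbacktrackingWalks G e (d + 1),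
            μ {w | WeightsIncreaseAlong (extend Subtype.val w 0) (Fin.tail t)} :=
          (measure_mono hcover).trans (measure_biUnion_finset_le _ _)
      _ ≤ #(nonbacktrackingWalks G e (d + 1)) * ((d + 1)! : ℝ≥0∞)⁻¹ := by
          simpa using sum_le_card_nsmul _ _ _ fun t ht =>
            measure_weightsIncreaseAlong_le ν (mem_nonbacktrackingWalks.1 ht).2.tail.1
      _ ≤ _ := by
          rw [ENNReal.div_eq_inv_mul, mul_comm]
          gcongr
          exact_mod_cast card_nonbacktrackingWalks_le hdeg e (d + 1)
  calc _ ≤ 1 - μ Sᶜ := tsub_le_tsub_left hbad 1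
    _ ≤ μ S := tsub_le_iff_right.2 (by simpa using measure_univ_le_add_compl (μ := μ) S)

/-- For a graph of maximum degree `r ≥ 3` with i.i.d. continuous edge weights, for any edge
`e` and any `d ≥ 0`, `P(IB(N(e)) ⊆ N_d(e)) ≥ 1 − 2(r−1)^{d+1}/(d+1)!`. -/
theorem IB_ball_probability_edges [Fintype V] [DecidableEq V] (G : SimpleGraph V)
    [DecidableRel G.Adj] (r : ℕ) (hr : 3 ≤ r) (hdeg : ∀ v, G.degree v ≤ r)
    (e : G.edgeSet) (d : ℕ) (ν : Measure ℝ) [IsProbabilityMeasure ν] [NullSingletonClass ν] :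
    1 - ((2 * (r - 1) ^ (d + 1) : ℕ) : ℝ≥0∞) / ((Nat.factorial (d + 1) : ℕ) : ℝ≥0∞) ≤
      (Measure.pi fun _ : G.edgeSet => ν)
        {w : G.edgeSet → ℝ | IB (lineG G) w (gball (lineG G) e 1) ⊆ gball (lineG G) e d} :=
  IB_ball_probability_edges_general G r hdeg e d ν
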